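/- For every extended logic program P, the paraconsistent well-founded model WFM_p(P) equals A(P), where A(P) = T ∪ not F with T the set of literals having a u/a-justified argument and F the set of literals all of whose arguments are u/a-overruled. -/

import Mathlib

/-- Objective literals: atoms and their explicit negations. -/
inductive Lit : Type where
  | pos : String → Lit
  | neg : String → Lit
deriving DecidableEq

/-- Explicit negation of an objective literal (`¬¬L = L`). -/
def Lit.compl : Lit → Lit
  | .pos a => .neg a
  | .neg a => .pos a

/-- A rule `head ← pos, not neg` of an extended logic program:
`pos` are the objective body literals and `neg` the default-negated ones. -/
structure Rule where
  head : Lit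
  pos : List Lit
  neg : List Lit

/-- An extended logic program is a set of rules. -/
abbrev Program := Set Rule

/-- An argument for `P`: a finite sequence of rules of `P` such that every
objective literal in the body of a rule is the head of a later rule. -/
def IsArg (P : Program) (A : List Rule) : Prop :=
  (∀ r ∈ A, r ∈ P) ∧
  ∀ i : Fin A.length, ∀ L ∈ (A.get i).pos,
    ∃ k : Fin A.length, i < k ∧ (A.get k).head = L

/-- The conclusions of an argument: the heads of its rules. -/
def conc (A : List Rule) : Set Lit := {L | ∃ r ∈ A, r.head = L}

/-- The assumptions of an argument: the objective literals `L` such that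
`not L` occurs in the body of one of its rules. -/
def assm (A : List Rule) : Set Lit := {L | ∃ r ∈ A, L ∈ r.neg}

/-- `A` is a minimal argument for `L`: no proper subargument of `A` has
conclusion `L`. -/
def ArgMinimalFor (P : Program) (A : List Rule) (L : Lit) : Prop :=
  IsArg P A ∧ L ∈ conc A ∧
  ∀ B : List Rule, B.Sublist A → B ≠ A → IsArg P B → L ∉ conc B

/-- The set of minimal arguments of `P`. -/
def Args (P : Program) : Type := {A : List Rule // ∃ L, ArgMinimalFor P A L}

/-- `A` undercuts `B`: some conclusion `L` of `A` is an assumption `not L` of `B`. -/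
def undercuts {P : Program} (A B : Args P) : Prop :=
  ∃ L, L ∈ conc A.1 ∧ L ∈ assm B.1

/-- `A` rebuts `B`: some conclusion `L` of `A` has `¬L` a conclusion of `B`. -/
def rebuts {P : Program} (A B : Args P) : Prop :=
  ∃ L, L ∈ conc A.1 ∧ L.compl ∈ conc B.1

/-- `A` attacks `B` iff `A` undercuts or rebuts `B`. -/
def attacks {P : Program} (A B : Args P) : Prop := undercuts A B ∨ rebuts A B

/-- `A` defeats `B` iff `A` undercuts `B`, or `A` rebuts `B` and `B` does not
undercut `A`. -/
def defeats {P : Program} (A B : Args P) : Prop :=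
  undercuts A B ∨ (rebuts A B ∧ ¬ undercuts B A)

/-- `A` strongly undercuts `B` iff `A` undercuts `B` and `B` does not undercut `A`. -/
def sundercuts {P : Program} (A B : Args P) : Prop :=
  undercuts A B ∧ ¬ undercuts B A

/-- The set of `x/y`-acceptable arguments with respect to `S`. -/
def Facc {Arg : Type*} (x y : Arg → Arg → Prop) (S : Set Arg) : Set Arg :=
  {A | ∀ B, x B A → ∃ C ∈ S, y C B}

theorem Facc_mono {Arg : Type*} (x y : Arg → Arg → Prop) : Monotone (Facc x y) := by
  intro S T hST A hA B hB
  obtain ⟨C, hC, hCB⟩ := hA B hB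
  exact ⟨C, hST hC, hCB⟩

/-- `Facc` as an order homomorphism. -/
def Fhom {Arg : Type*} (x y : Arg → Arg → Prop) : Set Arg →o Set Arg :=
  ⟨Facc x y, Facc_mono x y⟩

/-- The set of `x/y`-justified arguments. -/
def Jlfp {Arg : Type*} (x y : Arg → Arg → Prop) : Set Arg :=
  OrderHom.lfp (Fhom x y)

/-- Derivability in the least model of the GL-transformation `P/I`:
rules whose default-negated body literals avoid `I` may fire. -/
inductive GammaDeriv (P : Program) (I : Set Lit) : Lit → Prop where
  | step (r : Rule) (hr : r ∈ P) (hneg : ∀ L ∈ r.neg, L ∉ I)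
      (hpos : ∀ L ∈ r.pos, GammaDeriv P I L) : GammaDeriv P I r.head

/-- The Gelfond–Lifschitz operator `Γ_P`. -/
def Gamma (P : Program) (I : Set Lit) : Set Lit := {L | GammaDeriv P I L}

/-- The semi-normal version of `P`: each rule `L ← Body` becomes
`L ← not ¬L, Body`. -/
def seminormal (P : Program) : Program :=
  {r' | ∃ r ∈ P, r' = ⟨r.head, r.pos, r.head.compl :: r.neg⟩}

/-- `Γ_s`, the `Γ` operator of the semi-normal program. -/
def GammaS (P : Program) (I : Set Lit) : Set Lit := Gamma (seminormal P) I

theorem Gamma_anti (P : Program) : ∀ {I I' : Set Lit}, I ⊆ I' → Gamma P I' ⊆ Gamma P I := by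
  intro I I' h L hL
  induction hL with
  | step r hr hneg hpos ih =>
      exact GammaDeriv.step r hr (fun L hL hI => hneg L hL (h hI)) ih

/-- The monotone operator `I ↦ Γ_P (Γ_Q I)`. -/
def GammaComp (P Q : Program) : Set Lit →o Set Lit :=
  ⟨fun I => Gamma P (Gamma Q I), fun _ _ h => Gamma_anti P (Gamma_anti Q h)⟩

/-!
An argument is a derivation in the Gelfond–Lifschitz reduct, so `L ∈ Γ I` iff some argument for
`L` has no assumption in `I`, and `L ∈ Γ_s I` iff moreover none of its conclusions has its
complement in `I`. Hence, if every literal of `I` is concluded by an argument of `S`, any argument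
with a conclusion outside `Γ_s I` is attacked by `S`; and an argument witnessing `L ∈ Γ_s I` is
attacked by no argument all of whose conclusions lie in `I`. The first fact makes the conclusions
of the justified arguments a pre-fixpoint of `Γ ∘ Γ_s`; the second, by induction along `J_{u/a}`,
puts them inside every pre-fixpoint. The same two facts identify the false part.
-/

@[simp] lemma Lit.compl_compl (L : Lit) : L.compl.compl = L := by
  cases L <;> rfl

lemma conc_nil : conc [] = ∅ := by simp [conc]

lemma conc_cons (r : Rule) (A : List Rule) : conc (r :: A) = insert r.head (conc A) := by
  ext; simp [conc, eq_comm]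

lemma conc_append (A B : List Rule) : conc (A ++ B) = conc A ∪ conc B := by
  ext; simp [conc, or_and_right, exists_or]

lemma assm_nil : assm [] = ∅ := by simp [assm]

lemma assm_cons (r : Rule) (A : List Rule) : assm (r :: A) = {L | L ∈ r.neg} ∪ assm A := by
  ext; simp [assm]

lemma assm_append (A B : List Rule) : assm (A ++ B) = assm A ∪ assm B := by
  ext; simp [assm, or_and_right, exists_or]

lemma conc_mono {A B : List Rule} (h : A.Sublist B) : conc A ⊆ conc B :=
  fun _ ⟨r, hr, hL⟩ => ⟨r, h.subset hr, hL⟩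

lemma assm_mono {A B : List Rule} (h : A.Sublist B) : assm A ⊆ assm B :=
  fun _ ⟨r, hr, hL⟩ => ⟨r, h.subset hr, hL⟩

lemma disjoint_conc_iff {A : List Rule} {s : Set Lit} :
    Disjoint (conc A) s ↔ ∀ r ∈ A, r.head ∉ s := by
  simp [Set.disjoint_left, conc]

section Arguments

variable {P : Program}

lemma isArg_nil : IsArg P [] :=
  ⟨by simp, fun i => i.elim0⟩

lemma isArg_cons_iff {r : Rule} {A : List Rule} :
    IsArg P (r :: A) ↔ r ∈ P ∧ (∀ L ∈ r.pos, L ∈ conc A) ∧ IsArg P A := by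
  constructor
  · rintro ⟨hmem, hidx⟩
    refine ⟨hmem r List.mem_cons_self, fun L hL => ?_,
      fun r' h => hmem r' (List.mem_cons_of_mem _ h), fun i L hL => ?_⟩
    · obtain ⟨⟨_ | j, hj⟩, hk, hkL⟩ := hidx ⟨0, by simp⟩ L hL
      · exact absurd hk (lt_irrefl _)
      · exact ⟨A[j]'(by simpa using hj), List.getElem_mem _, by simpa using hkL⟩
    · obtain ⟨⟨_ | j, hj⟩, hk, hkL⟩ := hidx i.succ L (by simpa using hL)
      · exact absurd hk (by simp)
      · exact ⟨⟨j, by simpa using hj⟩, by simpa [Fin.lt_def] using hk, by simpa using hkL⟩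
  · rintro ⟨hr, hpos, hmem, hidx⟩
    refine ⟨fun r' h => (List.mem_cons.mp h).elim (· ▸ hr) (hmem r'), ?_⟩
    rintro ⟨_ | i, hi⟩ L hL
    · obtain ⟨r', hr', rfl⟩ := hpos L (by simpa using hL)
      obtain ⟨j, hj, rfl⟩ := List.getElem_of_mem hr'
      exact ⟨⟨j + 1, by simpa⟩, by simp [Fin.lt_def], by simp⟩
    · obtain ⟨⟨k, hk⟩, hlt, hkL⟩ := hidx ⟨i, by simpa using hi⟩ L (by simpa using hL)
      exact ⟨⟨k + 1, by simpa⟩, by simpa [Fin.lt_def] using hlt, by simpa using hkL⟩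

lemma isArg_append {A B : List Rule} (hA : IsArg P A) (hB : IsArg P B) : IsArg P (A ++ B) := by
  induction A with
  | nil => simpa using hB
  | cons r A ih =>
    obtain ⟨hr, hpos, hA⟩ := isArg_cons_iff.mp hA
    rw [List.cons_append, isArg_cons_iff, conc_append]
    exact ⟨hr, fun L hL => Or.inl (hpos L hL), ih hA⟩

lemma isArg_sep_iff {p : Rule → Prop} {A : List Rule} :
    IsArg {r ∈ P | p r} A ↔ IsArg P A ∧ ∀ r ∈ A, p r :=
  ⟨fun ⟨hmem, hidx⟩ => ⟨⟨fun r hr => (hmem r hr).1, hidx⟩, fun r hr => (hmem r hr).2⟩,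
    fun ⟨⟨hmem, hidx⟩, hp⟩ => ⟨fun r hr => ⟨hmem r hr, hp r hr⟩, hidx⟩⟩

lemma Args.isArg (A : Args P) : IsArg P A.1 :=
  A.2.choose_spec.1

lemma exists_args_sublist {A : List Rule} {L : Lit} (hA : IsArg P A) (hL : L ∈ conc A) :
    ∃ B : Args P, B.1.Sublist A ∧ L ∈ conc B.1 := by
  obtain ⟨B, ⟨hBA, hB, hLB⟩, hmin⟩ := (measure List.length).wf.has_min
    {B | B.Sublist A ∧ IsArg P B ∧ L ∈ conc B} ⟨A, List.Sublist.refl A, hA, hL⟩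
  refine ⟨⟨B, L, hB, hLB, fun C hCB hne hC hLC => hmin C ⟨hCB.trans hBA, hC, hLC⟩ ?_⟩, hBA, hLB⟩
  exact lt_of_le_of_ne hCB.length_le (mt hCB.eq_of_length hne)

end Arguments

section Gamma

variable {P : Program} {I : Set Lit}

lemma conc_subset_gamma {A : List Rule} (hA : IsArg P A) (hAI : Disjoint (assm A) I) :
    conc A ⊆ Gamma P I := by
  induction A with
  | nil => simp [conc_nil]
  | cons r A ih =>
    obtain ⟨hr, hpos, hA⟩ := isArg_cons_iff.mp hA
    rw [assm_cons, Set.disjoint_union_left] at hAI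
    have hAΓ := ih hA hAI.2
    rw [conc_cons]
    exact Set.insert_subset
      (GammaDeriv.step r hr (fun M hM => Set.disjoint_left.mp hAI.1 hM) fun M hM => hAΓ (hpos M hM))
      hAΓ

lemma exists_isArg_of_forall_mem {ls : List Lit}
    (h : ∀ L ∈ ls, ∃ A, IsArg P A ∧ L ∈ conc A ∧ Disjoint (assm A) I) :
    ∃ A, IsArg P A ∧ (∀ L ∈ ls, L ∈ conc A) ∧ Disjoint (assm A) I := by
  induction ls with
  | nil => exact ⟨[], isArg_nil, by simp, by simp [assm_nil]⟩
  | cons L ls ih =>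
    obtain ⟨A, hA, hLA, hAI⟩ := h L List.mem_cons_self
    obtain ⟨B, hB, hlsB, hBI⟩ := ih fun L' hL' => h L' (List.mem_cons_of_mem _ hL')
    refine ⟨A ++ B, isArg_append hA hB, ?_, ?_⟩
    · simp only [List.forall_mem_cons, conc_append]
      exact ⟨Or.inl hLA, fun L' hL' => Or.inr (hlsB L' hL')⟩
    · rw [assm_append]
      exact Set.disjoint_union_left.mpr ⟨hAI, hBI⟩

lemma mem_gamma_iff {L : Lit} :
    L ∈ Gamma P I ↔ ∃ A, IsArg P A ∧ L ∈ conc A ∧ Disjoint (assm A) I := by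
  refine ⟨fun hL => ?_, fun ⟨A, hA, hLA, hAI⟩ => conc_subset_gamma hA hAI hLA⟩
  induction hL with
  | step r hr hneg _ ih =>
    obtain ⟨A, hA, hposA, hAI⟩ := exists_isArg_of_forall_mem ih
    refine ⟨r :: A, isArg_cons_iff.mpr ⟨hr, hposA, hA⟩, by simp [conc_cons], ?_⟩
    rw [assm_cons]
    exact Set.disjoint_union_left.mpr ⟨Set.disjoint_left.mpr hneg, hAI⟩

/-- A seminormal rule `L ← not ¬L, Body` fires exactly when `L ← Body` fires and `¬L ∉ I`. -/
lemma gammaS_eq : GammaS P I = Gamma {r ∈ P | r.head.compl ∉ I} I := by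
  ext L
  constructor
  · intro hL
    induction hL with
    | step _ hr hneg _ ih =>
      obtain ⟨r, hr, rfl⟩ := hr
      exact GammaDeriv.step r ⟨hr, hneg _ List.mem_cons_self⟩
        (fun M hM => hneg M (List.mem_cons_of_mem _ hM)) ih
  · intro hL
    induction hL with
    | step r hr hneg _ ih =>
      exact GammaDeriv.step (P := seminormal P) ⟨r.head, r.pos, r.head.compl :: r.neg⟩
        ⟨r, hr.1, rfl⟩ (by simpa using ⟨hr.2, hneg⟩) ih

lemma mem_gammaS_iff {L : Lit} :
    L ∈ GammaS P I ↔ ∃ A, IsArg P A ∧ L ∈ conc A ∧ Disjoint (assm A) I ∧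
      Disjoint (conc A) (Lit.compl ⁻¹' I) := by
  simp only [gammaS_eq, mem_gamma_iff, isArg_sep_iff, disjoint_conc_iff, Set.mem_preimage]
  exact exists_congr fun A => by tauto

end Gamma

section Attacks

variable {P : Program} {I : Set Lit}

def concOf (S : Set (Args P)) : Set Lit := {L | ∃ A ∈ S, L ∈ conc A.1}

lemma exists_attacks_of_not_mem_gammaS {S : Set (Args P)} (hI : I ⊆ concOf S) {B : Args P}
    {L : Lit} (hL : L ∈ conc B.1) (hLI : L ∉ GammaS P I) : ∃ C ∈ S, attacks C B := by
  by_contra! h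
  refine hLI (mem_gammaS_iff.mpr ⟨B.1, B.isArg, hL, Set.disjoint_left.mpr fun M hM hMI => ?_,
    Set.disjoint_left.mpr fun M hM hMI => ?_⟩)
  · obtain ⟨C, hC, hMC⟩ := hI hMI
    exact h C hC (Or.inl ⟨M, hMC, hM⟩)
  · obtain ⟨C, hC, hMC⟩ := hI hMI
    exact h C hC (Or.inr ⟨M.compl, hMC, by simpa using hM⟩)

lemma exists_args_not_attacked_of_mem_gammaS {L : Lit} (hL : L ∈ GammaS P I) :
    ∃ B : Args P, L ∈ conc B.1 ∧ ∀ C : Args P, conc C.1 ⊆ I → ¬ attacks C B := by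
  obtain ⟨A, hA, hLA, hassm, hconc⟩ := mem_gammaS_iff.mp hL
  obtain ⟨B, hBA, hLB⟩ := exists_args_sublist hA hLA
  refine ⟨B, hLB, fun C hCI => ?_⟩
  rintro (⟨M, hMC, hMB⟩ | ⟨M, hMC, hMB⟩)
  · exact Set.disjoint_left.mp hassm (assm_mono hBA hMB) (hCI hMC)
  · exact Set.disjoint_left.mp hconc (conc_mono hBA hMB) (by simpa using hCI hMC)

end Attacks

lemma facc_jlfp {Arg : Type*} (x y : Arg → Arg → Prop) : Facc x y (Jlfp x y) = Jlfp x y :=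
  (Fhom x y).map_lfp

section Justified

variable {P : Program} {T : Set Lit}

lemma disjoint_assm_gammaS_of_mem_jlfp (hT : Gamma P (GammaS P T) ⊆ T) {A : Args P}
    (hA : A ∈ Jlfp undercuts attacks) : Disjoint (assm A.1) (GammaS P T) := by
  suffices Jlfp undercuts attacks ⊆ {A : Args P | Disjoint (assm A.1) (GammaS P T)} from this hA
  refine OrderHom.lfp_le _ fun A hA => Set.disjoint_left.mpr fun M hMA hMT => ?_
  obtain ⟨B, hMB, hB⟩ := exists_args_not_attacked_of_mem_gammaS hMT
  obtain ⟨C, hC, hCB⟩ := hA B ⟨M, hMB, hMA⟩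
  exact hB C ((conc_subset_gamma C.isArg hC).trans hT) hCB

lemma concOf_jlfp_subset (hT : Gamma P (GammaS P T) ⊆ T) :
    concOf (Jlfp undercuts attacks : Set (Args P)) ⊆ T :=
  fun _ ⟨A, hA, hLA⟩ => hT (conc_subset_gamma A.isArg (disjoint_assm_gammaS_of_mem_jlfp hT hA) hLA)

lemma gamma_gammaS_concOf_jlfp_subset :
    Gamma P (GammaS P (concOf (Jlfp undercuts attacks : Set (Args P)))) ⊆
      concOf (Jlfp undercuts attacks : Set (Args P)) := by
  intro L hL
  obtain ⟨A, hA, hLA, hAI⟩ := mem_gamma_iff.mp hL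
  obtain ⟨B, hBA, hLB⟩ := exists_args_sublist hA hLA
  refine ⟨B, ?_, hLB⟩
  rw [← facc_jlfp]
  rintro D ⟨M, hMD, hMB⟩
  exact exists_attacks_of_not_mem_gammaS subset_rfl hMD
    (Set.disjoint_left.mp hAI (assm_mono hBA hMB))

end Justified

/-- Equivalence of the `u/a` argumentation semantics and the paraconsistent
well-founded semantics WFSX: the true part `T = lfp(Γ∘Γ_s)` of `WFM_p(P)`
consists exactly of the conclusions of `u/a`-justified arguments, and the
false part (the literals `L` with `not L ∈ WFM_p(P)`, i.e. `L ∉ Γ_s T`)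
consists exactly of the literals all of whose arguments are `u/a`-overruled. -/
theorem wfsx_eq_argumentation (P : Program) (T : Set Lit)
    (hT : T = OrderHom.lfp (GammaComp P (seminormal P))) :
    T = {L | ∃ A : Args P, A ∈ Jlfp undercuts attacks ∧ L ∈ conc A.1} ∧
    {L | L ∉ GammaS P T} =
      {L | ∀ A : Args P, L ∈ conc A.1 →
        ∃ B : Args P, B ∈ Jlfp undercuts attacks ∧ attacks B A} := by
  have hfix : Gamma P (GammaS P T) = T := hT ▸ (GammaComp P (seminormal P)).map_lfp
  have hTJ : T = concOf (Jlfp undercuts attacks) :=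
    le_antisymm (hT ▸ OrderHom.lfp_le _ gamma_gammaS_concOf_jlfp_subset)
      (concOf_jlfp_subset hfix.le)
  refine ⟨hTJ, Set.ext fun L => ⟨fun hL A hLA => exists_attacks_of_not_mem_gammaS hTJ.le hLA hL,
    fun h hL => ?_⟩⟩
  obtain ⟨B, hLB, hB⟩ := exists_args_not_attacked_of_mem_gammaS hL
  obtain ⟨C, hC, hCB⟩ := h B hLB
  exact hB C (fun M hM => concOf_jlfp_subset hfix.le ⟨C, hC, hM⟩) hCB
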